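/- Fix q ∈ (−1,1]. For every symmetric f ∈ L²(ℝ₊²), one has ⟨f ⊗_q^1 f, f ⊗_q^1 f⟩_q = (1+q)⁵ ‖f⌢₁f‖²_{L²(ℝ₊²)}, where ⟨·,·⟩_q is the q-inner product on L²(ℝ₊²). -/

import Mathlib

open MeasureTheory

noncomputable section

/-- Lebesgue measure restricted to `ℝ₊ = [0,∞)`. -/
def mR : Measure ℝ := volume.restrict (Set.Ici (0 : ℝ))

/-- Lebesgue measure on `ℝ₊ⁿ`. -/
def μn (n : ℕ) : Measure (Fin n → ℝ) := Measure.pi fun _ => mR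

/-- Number of inversions of a map `σ : Fin p → Fin m`:
`inv(σ) = Card {i < j : σ i > σ j}`. -/
def invCount {p m : ℕ} (σ : Fin p → Fin m) : ℕ :=
  (Finset.univ.filter fun ij : Fin p × Fin p => ij.1 < ij.2 ∧ σ ij.2 < σ ij.1).card

/-- The `q`-inner product
`⟨f,g⟩_q = Σ_{σ ∈ S_n} q^{inv σ} ∫ f(t_{σ(1)},…,t_{σ(n)}) g(t₁,…,t_n) dt`. -/
def qInner (n : ℕ) (q : ℝ) (f g : (Fin n → ℝ) → ℝ) : ℝ :=
  ∑ σ : Equiv.Perm (Fin n),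
    q ^ invCount (fun i => σ i) * ∫ t, f (fun i => t (σ i)) * g t ∂ μn n

/-- `f*`, the mirror of `f` : `f*(t₁,…,tₙ) = f(tₙ,…,t₁)`. -/
def mirror {n : ℕ} (f : (Fin n → ℝ) → ℝ) : (Fin n → ℝ) → ℝ := fun t => f fun i => t i.rev

/-- The pairing integral `∫_{P₂(σ)} F ⊗ H` associated with the pairing
`P₂(σ) = {{N+1-i, N+σ(i)} : 1 ≤ i ≤ N}` of `{1,…,2N}`, namely
`∫ F(s₁,…,s_N) H(s_{N+1-σ⁻¹(1)},…,s_{N+1-σ⁻¹(N)}) ds`. -/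
def P2Integral (N : ℕ) (σ : Equiv.Perm (Fin N)) (F H : (Fin N → ℝ) → ℝ) : ℝ :=
  ∫ s, F s * H (fun i => s (σ.symm i).rev) ∂ μn N

/-- `f` is symmetric: for every permutation `σ`, `f(t_{σ(1)},…,t_{σ(n)}) = f(t₁,…,tₙ)`
for almost every `t`. -/
def SymmFn {n : ℕ} (f : (Fin n → ℝ) → ℝ) : Prop :=
  ∀ σ : Equiv.Perm (Fin n), ∀ᵐ t ∂ μn n, f (fun i => t (σ i)) = f t

/-- Safe coordinate access: `gv t k = t k` when `k < m`, and `0` otherwise. -/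
def gv {m : ℕ} (t : Fin m → ℝ) (k : ℕ) : ℝ := if h : k < m then t ⟨k, h⟩ else 0

/-- The `p`-th contraction `f ⌢_p g`:
`(f ⌢_p g)(t₁,…,t_{n+m-2p}) = ∫ f(t₁,…,t_{n-p},s_p,…,s₁) g(s₁,…,s_p,t_{n-p+1},…,t_{n+m-2p}) ds`. -/
def contr (n m p : ℕ) (f : (Fin n → ℝ) → ℝ) (g : (Fin m → ℝ) → ℝ) :
    (Fin (n + m - 2 * p) → ℝ) → ℝ :=
  fun t => ∫ s : Fin p → ℝ,
      f (fun i => if (i : ℕ) < n - p then gv t i else gv s (n - 1 - (i : ℕ))) *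
      g (fun j => if (j : ℕ) < p then gv s j else gv t (n - p + ((j : ℕ) - p))) ∂ μn p

/-- `α(σ)` for a (strictly decreasing, 0-indexed) `σ : Fin p → Fin n`;
in 1-indexed terms `α(σ) = Σᵢ (n+1-σ(i)) - p(p+1)/2`. -/
def alphaA (n p : ℕ) (σ : Fin p → Fin n) : ℕ := (∑ i, (n - (σ i : ℕ))) - p * (p + 1) / 2

/-- `β(σ)` for an (injective, 0-indexed) `σ : Fin p → Fin n`;
in 1-indexed terms `β(σ) = Σᵢ σ(i) - p(p+1)/2 + inv(σ)`. -/
def betaB (n p : ℕ) (σ : Fin p → Fin n) : ℕ :=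
  ((∑ i, (σ i : ℕ)) - p * (p - 1) / 2) + invCount σ

/-- `f_q^{(p)}`, as a function of `(t₁,…,t_{n-p},s_p,…,s₁)`:
`Σ_{σ : {1,…,p} → {1,…,n} strictly decreasing} q^{α(σ)} f(x₁,…,xₙ)` where `x_{σ(i)} = s_i`
and the remaining coordinates, read increasingly, are `t₁,…,t_{n-p}`. -/
def qexpDec (n p : ℕ) (q : ℝ) (f : (Fin n → ℝ) → ℝ) : (Fin n → ℝ) → ℝ :=
  fun u => ∑ σ ∈ Finset.univ.filter (fun σ : Fin p → Fin n => ∀ i j : Fin p, i < j → σ j < σ i),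
    q ^ alphaA n p σ * f (fun j =>
      if ∃ i, σ i = j then
        ∑ i ∈ Finset.univ.filter (fun i => σ i = j), gv u (n - 1 - (i : ℕ))
      else gv u ((Finset.univ.filter fun j' : Fin n => j' < j ∧ ∀ i, σ i ≠ j').card))

/-- `f_q^{[p]}`, as a function of `(s₁,…,s_p,t₁,…,t_{n-p})`:
`Σ_{σ : {1,…,p} → {1,…,n} injective} q^{β(σ)} f(x₁,…,xₙ)` where `x_{σ(i)} = s_i`
and the remaining coordinates, read increasingly, are `t₁,…,t_{n-p}`. -/
def qexpInj (n p : ℕ) (q : ℝ) (f : (Fin n → ℝ) → ℝ) : (Fin n → ℝ) → ℝ :=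
  fun u => ∑ σ ∈ Finset.univ.filter (fun σ : Fin p → Fin n => Function.Injective σ),
    q ^ betaB n p σ * f (fun j =>
      if ∃ i, σ i = j then
        ∑ i ∈ Finset.univ.filter (fun i => σ i = j), gv u (i : ℕ)
      else gv u (p + (Finset.univ.filter fun j' : Fin n => j' < j ∧ ∀ i, σ i ≠ j').card))

/-- The `q`-contraction `f ⊗_q^p g := f_q^{(p)} ⌢_p g_q^{[p]}`. -/
def qcontr (n m p : ℕ) (q : ℝ) (f : (Fin n → ℝ) → ℝ) (g : (Fin m → ℝ) → ℝ) :
    (Fin (n + m - 2 * p) → ℝ) → ℝ :=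
  contr n m p (qexpDec n p q f) (qexpInj m p q g)

/-- Two (2-element) sets form a crossing: `{x₁,y₁}, {x₂,y₂}` with `x₁ < x₂ < y₁ < y₂`. -/
def Crossing (p₁ p₂ : Finset ℕ) : Prop :=
  ∃ x₁ ∈ p₁, ∃ y₁ ∈ p₁, ∃ x₂ ∈ p₂, ∃ y₂ ∈ p₂, x₁ < x₂ ∧ x₂ < y₁ ∧ y₁ < y₂

/-- The number of crossings `Cr(π)` of a pairing `π` (each crossing counted once:
the pair containing the smallest point is listed first). -/
def crNum (π : Finset (Finset ℕ)) : ℕ := by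
  classical exact ((π ×ˢ π).filter fun pp => Crossing pp.1 pp.2).card

/-- `π` is a pairing of `{0,…,N-1}`: a partition of it into 2-element sets. -/
def IsPairingOn (N : ℕ) (π : Finset (Finset ℕ)) : Prop :=
  (∀ pr ∈ π, pr.card = 2 ∧ pr ⊆ Finset.range N) ∧ ∀ x < N, ∃! pr, pr ∈ π ∧ x ∈ pr

/-- `off n i = n₁ + … + nᵢ`, the offset of the `(i+1)`-th block. -/
def off (n : ℕ → ℕ) (i : ℕ) : ℕ := ∑ j ∈ Finset.range i, n j

/-- `π ∈ C₂(n₁ ⊗ … ⊗ n_r)`: `π` is a pairing of the ground set partitioned into the `r`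
consecutive blocks of sizes `n 0, …, n (r-1)`, and every pair of `π` meets two distinct
blocks (no pair is contained in a single block). -/
def Respects (r : ℕ) (n : ℕ → ℕ) (π : Finset (Finset ℕ)) : Prop :=
  IsPairingOn (off n r) π ∧
    ∀ pr ∈ π, ¬ ∃ i < r, ∀ x ∈ pr, off n i ≤ x ∧ x < off n (i + 1)

/-- The (finite) set `C₂(n₁ ⊗ … ⊗ n_r)` of all respecting pairings. -/
def respPairings (r : ℕ) (n : ℕ → ℕ) : Finset (Finset (Finset ℕ)) := by
  classical exact ((Finset.range (off n r)).powerset.powerset).filter fun π => Respects r n π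

/-- The pairing integral `∫_π F`: one integration variable per pair of `π`, the two
coordinates of each pair being set equal to that variable, integrated over `ℝ₊^{N/2}`. -/
def pairingIntegral (π : Finset (Finset ℕ)) (F : (ℕ → ℝ) → ℝ) : ℝ :=
  ∫ u : {pr // pr ∈ π} → ℝ,
    F (fun x => ∑ pr ∈ Finset.univ.filter (fun pr : {pr // pr ∈ π} => x ∈ pr.1), u pr)
    ∂ Measure.pi fun _ => mR

/-- The product `f₁(t₁,…,t_{n₁}) f₂(t_{n₁+1},…,t_{n₁+n₂}) ⋯ f_r(…,t_n)` as a function of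
`t : ℕ → ℝ` (blocks of sizes `n 0, …, n (r-1)`). -/
def prodBlocks (r : ℕ) (n : ℕ → ℕ) (f : ∀ i, (Fin (n i) → ℝ) → ℝ) : (ℕ → ℝ) → ℝ :=
  fun t => ∏ i ∈ Finset.range r, f i (fun j => t (off n i + (j : ℕ)))

/-- `P₂(σ) = {{n+1-i, n+σ(i)} : 1 ≤ i ≤ n}` as a pairing of `{0,…,2n-1}` (0-indexed). -/
def P2set (n : ℕ) (σ : Equiv.Perm (Fin n)) : Finset (Finset ℕ) :=
  Finset.univ.image fun i : Fin n => ({n - 1 - (i : ℕ), n + ((σ i : Fin n) : ℕ)} : Finset ℕ)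

/-- The map `φ` in the construction of `F(σ₁,σ₂,π')`: the unpaired points of the first two
blocks are mapped increasingly onto `{0,…,n₀+n₁-2p-1}` and every later point `x` is mapped
to `x - 2p`. -/
def phiF (n₀ n₁ p : ℕ) (σ₁ : Fin p → Fin n₀) (σ₂ : Fin p → Fin n₁) (x : ℕ) : ℕ :=
  if x < n₀ + n₁ then
    ((Finset.range x).filter fun y =>
      (∀ i, ((σ₁ i : ℕ)) ≠ y) ∧ (∀ i, n₀ + (σ₂ i : ℕ) ≠ y)).card
  else x - 2 * p

/-- The pairing `F(σ₁,σ₂,π')` of the ground set `{0,…,N-1}`: it contains the `p` pairs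
`{σ₁(i), n₀+σ₂(i)}`, and its remaining pairs are exactly the `φ`-preimages of the pairs
of `π'`. -/
def Fpair (N n₀ n₁ p : ℕ) (σ₁ : Fin p → Fin n₀) (σ₂ : Fin p → Fin n₁)
    (π' : Finset (Finset ℕ)) : Finset (Finset ℕ) :=
  (Finset.univ.image fun i : Fin p => ({(σ₁ i : ℕ), n₀ + (σ₂ i : ℕ)} : Finset ℕ)) ∪
  π'.image fun pr => (Finset.range N).filter fun x =>
    (x < n₀ + n₁ → (∀ i, (σ₁ i : ℕ) ≠ x) ∧ (∀ i, n₀ + (σ₂ i : ℕ) ≠ x)) ∧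
    phiF n₀ n₁ p σ₁ σ₂ x ∈ pr

/-- Block sizes `(n₁+n₂-2p, n₃, …, n_r)` after contracting the first two blocks. -/
def contractedSizes (n : ℕ → ℕ) (p : ℕ) : ℕ → ℕ
  | 0 => n 0 + n 1 - 2 * p
  | k + 1 => n (k + 2)

/-- Kernels `(f₁ ⊗_q^p f₂, f₃, …, f_r)` after contracting the first two kernels. -/
def contractedKernels (n : ℕ → ℕ) (p : ℕ) (q : ℝ) (f : ∀ i, (Fin (n i) → ℝ) → ℝ) :
    ∀ j, (Fin (contractedSizes n p j) → ℝ) → ℝ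
  | 0 => qcontr (n 0) (n 1) p q (f 0) (f 1)
  | k + 1 => f (k + 2)

end

/-!
For symmetric `f` both `q`-expansions `f_q^{(1)}` and `f_q^{[1]}` equal `(1 + q) f` almost
everywhere, so `f ⊗_q^1 f = (1 + q)² (f ⌢₁ f)`. The contraction `f ⌢₁ f` of a symmetric kernel is
again symmetric, so the two permutations of `S₂` contribute equally to the `q`-inner product,
which produces the last factor `1 + q`. The almost-everywhere bookkeeping is done on
`ℝ₊ × ℝ₊`, where `f ⌢₁ g` is the composition of integral kernels.
-/

open MeasureTheory

/-- No integrability is needed: if `g ∉ L²` both sides vanish, as junk values of `∫` and of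
`ENNReal.toReal ⊤`. -/
theorem integral_sq_eq_toReal_eLpNorm_sq {α : Type*} [MeasurableSpace α] {μ : Measure α}
    {g : α → ℝ} (hg : AEStronglyMeasurable g μ) :
    ∫ x, g x ^ 2 ∂μ = (eLpNorm g 2 μ).toReal ^ 2 := by
  rw [integral_eq_lintegral_of_nonneg_ae (ae_of_all _ fun x => sq_nonneg (g x)) (hg.pow 2),
    eLpNorm_eq_lintegral_rpow_enorm_toReal two_ne_zero ENNReal.ofNat_ne_top, ← ENNReal.toReal_pow,
    ← ENNReal.rpow_natCast, ← ENNReal.rpow_mul]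
  norm_num
  congr 1
  refine lintegral_congr fun x => ?_
  rw [← ofReal_norm, ← ENNReal.ofReal_pow (norm_nonneg _), Real.norm_eq_abs, sq_abs]

section KernelMul

variable {α : Type*} [MeasurableSpace α]

noncomputable def kernelMul (μ : Measure α) (F G : α × α → ℝ) (z : α × α) : ℝ :=
  ∫ x, F (z.1, x) * G (x, z.2) ∂μ

variable {μ : Measure α}

theorem kernelMul_comp_swap (F G : α × α → ℝ) :
    (fun z => kernelMul μ F G z.swap) = kernelMul μ (fun z => G z.swap) (fun z => F z.swap) := by
  funext z
  simp only [kernelMul, Prod.fst_swap, Prod.snd_swap, Prod.swap_prod_mk, mul_comm]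

theorem kernelMul_const_mul (c d : ℝ) (F G : α × α → ℝ) :
    kernelMul μ (fun z => c * F z) (fun z => d * G z) = fun z => c * d * kernelMul μ F G z := by
  funext z
  simp only [kernelMul, ← integral_const_mul]
  congr 1; funext x; ring

variable [SFinite μ]

theorem kernelMul_congr_ae {F F' G G' : α × α → ℝ} (hF : F =ᵐ[μ.prod μ] F')
    (hG : G =ᵐ[μ.prod μ] G') : kernelMul μ F G =ᵐ[μ.prod μ] kernelMul μ F' G' := by
  have hF_rows : ∀ᵐ a ∂μ, ∀ᵐ x ∂μ, F (a, x) = F' (a, x) := Measure.ae_ae_of_ae_prod hF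
  have hG_cols : ∀ᵐ b ∂μ, ∀ᵐ x ∂μ, G (x, b) = G' (x, b) :=
    Measure.ae_ae_of_ae_prod (Measure.measurePreserving_swap.quasiMeasurePreserving.ae hG)
  filter_upwards [Measure.quasiMeasurePreserving_fst.ae hF_rows,
    Measure.quasiMeasurePreserving_snd.ae hG_cols] with z hFz hGz
  refine integral_congr_ae ?_
  filter_upwards [hFz, hGz] with x hFx hGx
  rw [hFx, hGx]

theorem MeasureTheory.AEStronglyMeasurable.kernelMul {F G : α × α → ℝ}
    (hF : AEStronglyMeasurable F (μ.prod μ)) (hG : AEStronglyMeasurable G (μ.prod μ)) :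
    AEStronglyMeasurable (kernelMul μ F G) (μ.prod μ) := by
  refine AEStronglyMeasurable.congr ?_ (kernelMul_congr_ae hF.ae_eq_mk hG.ae_eq_mk).symm
  refine (StronglyMeasurable.integral_prod_right' (ν := μ)
    (f := fun p : (α × α) × α => hF.mk F (p.1.1, p.2) * hG.mk G (p.2, p.1.2))
    ?_).aestronglyMeasurable
  exact (hF.stronglyMeasurable_mk.comp_measurable (by fun_prop)).mul
    (hG.stronglyMeasurable_mk.comp_measurable (by fun_prop))

theorem kernelMul_swap_ae_eq {F : α × α → ℝ} (hF : ∀ᵐ z ∂μ.prod μ, F z.swap = F z) :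
    (fun z => kernelMul μ F F z.swap) =ᵐ[μ.prod μ] kernelMul μ F F := by
  rw [kernelMul_comp_swap]
  exact kernelMul_congr_ae hF hF

theorem kernelMul_symmetrize_ae_eq {F : α × α → ℝ} (hF : ∀ᵐ z ∂μ.prod μ, F z.swap = F z)
    (q : ℝ) :
    kernelMul μ (fun z => F z + q * F z.swap) (fun z => F z + q * F z.swap)
      =ᵐ[μ.prod μ] fun z => (1 + q) ^ 2 * kernelMul μ F F z := by
  have hsymm : (fun z => F z + q * F z.swap) =ᵐ[μ.prod μ] fun z => (1 + q) * F z := by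
    filter_upwards [hF] with z hz
    rw [hz]; ring
  filter_upwards [kernelMul_congr_ae hsymm hsymm] with z hz
  rw [hz, kernelMul_const_mul, sq]

end KernelMul

instance : SigmaFinite mR := by unfold mR; infer_instance

theorem measurePreserving_finTwoArrow_μn :
    MeasurePreserving MeasurableEquiv.finTwoArrow (μn 2) (mR.prod mR) :=
  measurePreserving_finTwoArrow mR

theorem integral_μn_two (φ : (Fin 2 → ℝ) → ℝ) :
    ∫ t, φ t ∂μn 2 = ∫ z, φ ![z.1, z.2] ∂mR.prod mR :=
  (measurePreserving_finTwoArrow_μn.symm _).integral_comp' φ |>.symm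

theorem eLpNorm_μn_two (φ : (Fin 2 → ℝ) → ℝ) :
    eLpNorm φ 2 (μn 2) = eLpNorm (fun z : ℝ × ℝ => φ ![z.1, z.2]) 2 (mR.prod mR) := by
  rw [← (measurePreserving_finTwoArrow_μn.symm _).map_eq,
    MeasurableEquiv.finTwoArrow.symm.measurableEmbedding.eLpNorm_map_measure]
  rfl

theorem ae_μn_two {P : (Fin 2 → ℝ) → Prop} (h : ∀ᵐ t ∂μn 2, P t) :
    ∀ᵐ z ∂mR.prod mR, P ![z.1, z.2] :=
  (measurePreserving_finTwoArrow_μn.symm _).quasiMeasurePreserving.ae h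

theorem integral_μn_one (ψ : ℝ → ℝ) : ∫ s, ψ (s 0) ∂μn 1 = ∫ x, ψ x ∂mR :=
  (measurePreserving_funUnique mR (Fin 1)).integral_comp' ψ

theorem MeasureTheory.AEStronglyMeasurable.comp_vecCons_two {f : (Fin 2 → ℝ) → ℝ}
    (hf : AEStronglyMeasurable f (μn 2)) :
    AEStronglyMeasurable (fun z : ℝ × ℝ => f ![z.1, z.2]) (mR.prod mR) :=
  hf.comp_measurePreserving (measurePreserving_finTwoArrow_μn.symm _)

theorem SymmFn.ae_swap_two {f : (Fin 2 → ℝ) → ℝ} (hf : SymmFn f) :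
    ∀ᵐ z ∂mR.prod mR, f ![z.2, z.1] = f ![z.1, z.2] := by
  filter_upwards [ae_μn_two (hf (Equiv.swap 0 1))] with z hz
  rw [← hz]
  congr 1; funext i; fin_cases i <;> rfl

theorem qInner_two (q : ℝ) (g h : (Fin 2 → ℝ) → ℝ) :
    qInner 2 q g h = ∫ z, g ![z.1, z.2] * h ![z.1, z.2] ∂mR.prod mR +
      q * ∫ z, g ![z.2, z.1] * h ![z.1, z.2] ∂mR.prod mR := by
  have huniv : (Finset.univ : Finset (Equiv.Perm (Fin 2))) = {1, Equiv.swap 0 1} := by decide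
  have hinv_one : invCount (fun i => (1 : Equiv.Perm (Fin 2)) i) = 0 := by decide
  have hinv_swap : invCount (fun i => Equiv.swap (0 : Fin 2) 1 i) = 1 := by decide
  rw [qInner, huniv, Finset.sum_pair (by decide), hinv_one, hinv_swap, pow_zero, one_mul, pow_one,
    integral_μn_two, integral_μn_two]
  congr 3; funext z; congr 2; funext i; fin_cases i <;> rfl

theorem contr_two_two_one (f g : (Fin 2 → ℝ) → ℝ) (z : ℝ × ℝ) :
    contr 2 2 1 f g ![z.1, z.2] =
      kernelMul mR (fun z => f ![z.1, z.2]) (fun z => g ![z.1, z.2]) z := by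
  rw [kernelMul, ← integral_μn_one]
  unfold contr
  congr 1; funext s; congr 1 <;> congr 1 <;> funext i <;> fin_cases i <;> simp [gv]

theorem qexpDec_two_one (q : ℝ) (f : (Fin 2 → ℝ) → ℝ) (u : Fin 2 → ℝ) :
    qexpDec 2 1 q f u = f ![u 0, u 1] + q * f ![u 1, u 0] := by
  have hdec : (Finset.univ.filter fun σ : Fin 1 → Fin 2 => ∀ i j : Fin 1, i < j → σ j < σ i)
      = {fun _ => 1, fun _ => 0} := by decide
  have hα₁ : alphaA 2 1 (fun _ => 1) = 0 := by decide
  have hα₀ : alphaA 2 1 (fun _ => 0) = 1 := by decide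
  rw [qexpDec, hdec, Finset.sum_pair (by decide), hα₁, hα₀, pow_zero, one_mul, pow_one]
  congr 1
  · congr 1; funext j; fin_cases j <;> simp +decide [gv]
  · congr 2; funext j; fin_cases j <;> simp +decide [gv, @eq_comm _ (0 : Fin 2)]

theorem qexpInj_two_one (q : ℝ) (f : (Fin 2 → ℝ) → ℝ) (u : Fin 2 → ℝ) :
    qexpInj 2 1 q f u = f ![u 0, u 1] + q * f ![u 1, u 0] := by
  have hinj : (Finset.univ.filter fun σ : Fin 1 → Fin 2 => Function.Injective σ)
      = {fun _ => 0, fun _ => 1} := by decide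
  have hβ₀ : betaB 2 1 (fun _ => 0) = 0 := by decide
  have hβ₁ : betaB 2 1 (fun _ => 1) = 1 := by decide
  rw [qexpInj, hinj, Finset.sum_pair (by decide), hβ₀, hβ₁, pow_zero, one_mul, pow_one]
  congr 1
  · congr 1; funext j; fin_cases j <;> simp +decide [gv, @eq_comm _ (0 : Fin 2)]
  · congr 2; funext j; fin_cases j <;> simp +decide [gv]

theorem qcontr_two_two_one (q : ℝ) (f g : (Fin 2 → ℝ) → ℝ) (z : ℝ × ℝ) :
    qcontr 2 2 1 q f g ![z.1, z.2] =
      kernelMul mR (fun z => f ![z.1, z.2] + q * f ![z.2, z.1])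
        (fun z => g ![z.1, z.2] + q * g ![z.2, z.1]) z := by
  simp only [qcontr, contr_two_two_one, qexpDec_two_one, qexpInj_two_one]
  rfl

theorem stmt16_general (q : ℝ)
    (f : (Fin 2 → ℝ) → ℝ) (hf : MemLp f 2 (μn 2)) (hsym : SymmFn f) :
    qInner (2 + 2 - 2 * 1) q (qcontr 2 2 1 q f f) (qcontr 2 2 1 q f f) =
      (1 + q) ^ 5 * (eLpNorm (contr 2 2 1 f f) 2 (μn (2 + 2 - 2 * 1))).toReal ^ 2 := by
  set F : ℝ × ℝ → ℝ := fun z => f ![z.1, z.2]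
  set C := kernelMul mR F F
  have hF : ∀ᵐ z ∂mR.prod mR, F z.swap = F z := hsym.ae_swap_two
  have hFm : AEStronglyMeasurable F (mR.prod mR) := hf.aestronglyMeasurable.comp_vecCons_two
  have hQ : ∀ᵐ z ∂mR.prod mR, qcontr 2 2 1 q f f ![z.1, z.2] = (1 + q) ^ 2 * C z :=
    (kernelMul_symmetrize_ae_eq hF q).mono fun z hz => (qcontr_two_two_one q f f z).trans hz
  have hQ_swap : ∀ᵐ z ∂mR.prod mR, qcontr 2 2 1 q f f ![z.2, z.1] = (1 + q) ^ 2 * C z := by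
    filter_upwards [Measure.measurePreserving_swap.quasiMeasurePreserving.ae hQ,
      kernelMul_swap_ae_eq hF] with z hQz hCz
    exact hQz.trans (congrArg _ hCz)
  have hC_norm : eLpNorm (contr 2 2 1 f f) 2 (μn 2) = eLpNorm C 2 (mR.prod mR) :=
    (eLpNorm_μn_two (contr 2 2 1 f f)).trans (by congr 1; funext z; exact contr_two_two_one f f z)
  calc qInner 2 q (qcontr 2 2 1 q f f) (qcontr 2 2 1 q f f)
      = ∫ z, (1 + q) ^ 4 * C z ^ 2 ∂mR.prod mR + q * ∫ z, (1 + q) ^ 4 * C z ^ 2 ∂mR.prod mR := by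
        rw [qInner_two]
        refine congrArg₂ (· + q * ·) (integral_congr_ae ?_) (integral_congr_ae ?_)
        · filter_upwards [hQ] with z hz
          rw [hz]; ring
        · filter_upwards [hQ, hQ_swap] with z hz hz_swap
          rw [hz, hz_swap]; ring
    _ = (1 + q) ^ 5 * (eLpNorm (contr 2 2 1 f f) 2 (μn 2)).toReal ^ 2 := by
        rw [integral_const_mul, hC_norm, integral_sq_eq_toReal_eLpNorm_sq (hFm.kernelMul hFm)]
        ring

/-- For `q ∈ (-1,1]` and symmetric `f ∈ L²(ℝ₊²)`:
`⟨f ⊗_q^1 f, f ⊗_q^1 f⟩_q = (1+q)⁵ ‖f ⌢₁ f‖²_{L²(ℝ₊²)}`. -/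
theorem stmt16 (q : ℝ) (hq₁ : -1 < q) (hq₂ : q ≤ 1)
    (f : (Fin 2 → ℝ) → ℝ) (hf : MemLp f 2 (μn 2)) (hsym : SymmFn f) :
    qInner (2 + 2 - 2 * 1) q (qcontr 2 2 1 q f f) (qcontr 2 2 1 q f f) =
      (1 + q) ^ 5 * (eLpNorm (contr 2 2 1 f f) 2 (μn (2 + 2 - 2 * 1))).toReal ^ 2 :=
  stmt16_general q f hf hsym
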